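/- arXiv:1505.03993 — 11 statements merged into one kernel-verified Lean document; each statement's English description precedes it below -/
import Mathlib

section
/- Let a and p be real numbers with 0 < a < 1/√2 and a < p < √((1+a^2)/3). Then there exist unique real numbers b and c with b ∈ (a, p) and c > 0 such that for every complex z one has B_2(z)^3 − A(z)B_1(z)^2 = (1 + a^2 − 3p^2)(z^2 − b^2)(z^2 + c^2); in particular the complex zeros of B_2^3 − A·B_1^2 are exactly ±b and ±ic. -/
open Complex

/-- `A(z) = (z²-1)(z²-a²)`. -/
noncomputable def polyA (a : ℝ) (z : ℂ) : ℂ := (z ^ 2 - 1) * (z ^ 2 - (a : ℂ) ^ 2)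

/-- `B₂(z) = z²-p²`. -/
noncomputable def polyB2 (p : ℝ) (z : ℂ) : ℂ := z ^ 2 - (p : ℂ) ^ 2

/-- `B₁(z) = z`. -/
noncomputable def polyB1 (z : ℂ) : ℂ := z

/-!
In `w = z²` the polynomial `B₂³ − A·B₁²` is `f(w) = (w − p²)³ − w(w − 1)(w − a²)`,
a quadratic with leading coefficient `K = 1 + a² − 3p² > 0` and constant term `−p⁶`.
Since `3p² < 1 + a² < 1 + p²` forces `p < 1`, we get
`f(a²) = (a² − p²)³ < 0 < p²(p² − a²)(1 − p²) = f(p²)`, so `f` has a root `b² ∈ (a², p²)`,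
and by Vieta its other root is `−c²` with `c² = p⁶ / (K b²) > 0`.
Uniqueness follows by evaluating two such factorizations at `w = b²` and `w = −c²`.
-/

def branchPoly {R : Type*} [CommRing R] (a p w : R) : R :=
  (w - p ^ 2) ^ 3 - w * (w - 1) * (w - a ^ 2)

theorem polyB2_pow_three_sub_polyA_mul_polyB1_sq (a p : ℝ) (z : ℂ) :
    polyB2 p z ^ 3 - polyA a z * polyB1 z ^ 2 = branchPoly (a : ℂ) p (z ^ 2) := by
  simp only [polyB2, polyA, polyB1, branchPoly]
  ring

@[simp, norm_cast]
theorem ofReal_branchPoly (a p w : ℝ) :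
    ((branchPoly a p w : ℝ) : ℂ) = branchPoly (a : ℂ) p w := by
  simp [branchPoly]

theorem exists_branchPoly_eq_zero_mem_Ioo {a p : ℝ} (ha : 0 < a) (hap : a < p) (hp : p < 1) :
    ∃ β ∈ Set.Ioo (a ^ 2) (p ^ 2), branchPoly a p β = 0 := by
  have hap2 : a ^ 2 < p ^ 2 := pow_lt_pow_left₀ hap ha.le two_ne_zero
  have hp2 : p ^ 2 < 1 := pow_lt_one₀ (ha.trans hap).le hp two_ne_zero
  have hneg : branchPoly a p (a ^ 2) < 0 := by
    simp only [branchPoly, sub_self, mul_zero, sub_zero]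
    exact Odd.pow_neg (by decide) (sub_neg.mpr hap2)
  have hpos : 0 < branchPoly a p (p ^ 2) := by
    have : branchPoly a p (p ^ 2) = p ^ 2 * (1 - p ^ 2) * (p ^ 2 - a ^ 2) := by
      simp only [branchPoly]; ring
    rw [this]
    exact mul_pos (mul_pos (pow_pos (ha.trans hap) 2) (sub_pos.mpr hp2)) (sub_pos.mpr hap2)
  have hcont : Continuous (branchPoly a p) := by
    unfold branchPoly; fun_prop
  exact intermediate_value_Ioo hap2.le hcont.continuousOn (Set.mem_Ioo.mpr ⟨hneg, hpos⟩)

theorem branchPoly_eq_mul_of_eq_zero {F : Type*} [Field F] {a p β : F}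
    (hK : 1 + a ^ 2 - 3 * p ^ 2 ≠ 0) (hβ : β ≠ 0) (hroot : branchPoly a p β = 0) (w : F) :
    branchPoly a p w
      = (1 + a ^ 2 - 3 * p ^ 2) * (w - β) * (w + p ^ 6 / ((1 + a ^ 2 - 3 * p ^ 2) * β)) := by
  have hγ : (1 + a ^ 2 - 3 * p ^ 2) * β * (p ^ 6 / ((1 + a ^ 2 - 3 * p ^ 2) * β)) = p ^ 6 := by
    field_simp
  apply mul_left_cancel₀ hβ
  unfold branchPoly at hroot ⊢
  linear_combination w * hroot - (w - β) * hγ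

theorem eq_and_eq_of_forall_mul_sub_mul_add {F : Type*} [Field F] {K β γ β' γ' : F}
    (hK : K ≠ 0) (hβγ' : β + γ' ≠ 0) (hβ'γ : β' + γ ≠ 0)
    (h : ∀ w, K * (w - β) * (w + γ) = K * (w - β') * (w + γ')) : β = β' ∧ γ = γ' := by
  have hβ : K * (β - β') * (β + γ') = 0 := by simpa using (h β).symm
  have hγ : K * (-γ - β') * (-γ + γ') = 0 := by simpa using (h (-γ)).symm
  have hβ'γ' : -γ - β' ≠ 0 := by
    rw [← neg_add', neg_ne_zero, add_comm]; exact hβ'γ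
  constructor
  · simpa [hK, hβγ', sub_eq_zero] using hβ
  · simpa [hK, hβ'γ', neg_add_eq_zero, eq_comm] using hγ

theorem eq_and_eq_of_forall_mul_sq_sub_sq_mul_sq_add_sq {K : ℂ} (hK : K ≠ 0) {b c b' c' : ℝ}
    (hb : 0 < b) (hc : 0 ≤ c) (hb' : 0 < b') (hc' : 0 ≤ c')
    (h : ∀ z : ℂ, K * (z ^ 2 - (b : ℂ) ^ 2) * (z ^ 2 + (c : ℂ) ^ 2)
      = K * (z ^ 2 - (b' : ℂ) ^ 2) * (z ^ 2 + (c' : ℂ) ^ 2)) :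
    b = b' ∧ c = c' := by
  have hw : ∀ w : ℂ, K * (w - (b : ℂ) ^ 2) * (w + (c : ℂ) ^ 2)
      = K * (w - (b' : ℂ) ^ 2) * (w + (c' : ℂ) ^ 2) := fun w => by
    obtain ⟨z, rfl⟩ := IsAlgClosed.exists_pow_nat_eq w two_pos
    exact h z
  have hsum {x y : ℝ} (hx : 0 < x) : (x : ℂ) ^ 2 + (y : ℂ) ^ 2 ≠ 0 := by
    exact_mod_cast (by positivity : 0 < x ^ 2 + y ^ 2).ne'
  obtain ⟨hbb, hcc⟩ := eq_and_eq_of_forall_mul_sub_mul_add hK (hsum hb) (hsum hb') hw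
  exact ⟨(pow_left_inj₀ hb.le hb'.le two_ne_zero).mp (by exact_mod_cast hbb),
    (pow_left_inj₀ hc hc' two_ne_zero).mp (by exact_mod_cast hcc)⟩

theorem exists_polyB2_pow_three_sub_polyA_mul_polyB1_sq_eq {a p : ℝ} (ha : 0 < a) (hap : a < p)
    (hK : 0 < 1 + a ^ 2 - 3 * p ^ 2) :
    ∃ b c : ℝ, a < b ∧ b < p ∧ 0 < c ∧ ∀ z : ℂ, polyB2 p z ^ 3 - polyA a z * polyB1 z ^ 2
      = (1 + (a : ℂ) ^ 2 - 3 * (p : ℂ) ^ 2) * (z ^ 2 - (b : ℂ) ^ 2) * (z ^ 2 + (c : ℂ) ^ 2) := by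
  have hp : p < 1 := by nlinarith
  obtain ⟨β, ⟨haβ, hβp⟩, hroot⟩ := exists_branchPoly_eq_zero_mem_Ioo ha hap hp
  have hβ : 0 < β := (pow_pos ha 2).trans haβ
  have hγ : 0 < p ^ 6 / ((1 + a ^ 2 - 3 * p ^ 2) * β) :=
    div_pos (pow_pos (ha.trans hap) 6) (mul_pos hK hβ)
  refine ⟨√β, √(p ^ 6 / ((1 + a ^ 2 - 3 * p ^ 2) * β)), (Real.lt_sqrt ha.le).mpr haβ,
    (Real.sqrt_lt' (ha.trans hap)).mpr hβp, Real.sqrt_pos.mpr hγ, fun z => ?_⟩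
  have hrootC : branchPoly (a : ℂ) p β = 0 := by exact_mod_cast congrArg ofReal hroot
  have hKC : 1 + (a : ℂ) ^ 2 - 3 * (p : ℂ) ^ 2 ≠ 0 := by exact_mod_cast hK.ne'
  have hsq {x : ℝ} (hx : 0 ≤ x) : ((√x : ℝ) : ℂ) ^ 2 = x := by
    rw [← ofReal_pow, Real.sq_sqrt hx]
  rw [polyB2_pow_three_sub_polyA_mul_polyB1_sq, hsq hβ.le, hsq hγ.le,
    branchPoly_eq_mul_of_eq_zero hKC (ofReal_ne_zero.mpr hβ.ne') hrootC]
  push_cast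
  rfl

theorem sq_sub_sq_mul_sq_add_sq_eq_zero_iff (b c z : ℂ) :
    (z ^ 2 - b ^ 2) * (z ^ 2 + c ^ 2) = 0 ↔ z = b ∨ z = -b ∨ z = c * I ∨ z = -(c * I) := by
  have hc : z ^ 2 + c ^ 2 = z ^ 2 - (c * I) ^ 2 := by
    rw [mul_pow, I_sq]; ring
  rw [hc, mul_eq_zero, sub_eq_zero, sub_eq_zero, sq_eq_sq_iff_eq_or_eq_neg,
    sq_eq_sq_iff_eq_or_eq_neg, or_assoc]

theorem caseI_branch_points_general (a p : ℝ) (ha0 : 0 < a)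
    (hp0 : a < p) (hp1 : p < Real.sqrt ((1 + a ^ 2) / 3)) :
    ∃! bc : ℝ × ℝ,
      (a < bc.1 ∧ bc.1 < p ∧ 0 < bc.2 ∧
        (∀ z : ℂ, (polyB2 p z) ^ 3 - polyA a z * (polyB1 z) ^ 2
          = (1 + (a : ℂ) ^ 2 - 3 * (p : ℂ) ^ 2) * (z ^ 2 - (bc.1 : ℂ) ^ 2)
              * (z ^ 2 + (bc.2 : ℂ) ^ 2))) ∧
      (∀ z : ℂ, (polyB2 p z) ^ 3 - polyA a z * (polyB1 z) ^ 2 = 0 ↔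
        z = (bc.1 : ℂ) ∨ z = -(bc.1 : ℂ) ∨ z = (bc.2 : ℂ) * Complex.I
          ∨ z = -((bc.2 : ℂ) * Complex.I)) := by
  have hK : 0 < 1 + a ^ 2 - 3 * p ^ 2 := by
    linarith [(Real.lt_sqrt (ha0.trans hp0).le).mp hp1]
  have hKC : 1 + (a : ℂ) ^ 2 - 3 * (p : ℂ) ^ 2 ≠ 0 := by exact_mod_cast hK.ne'
  obtain ⟨b, c, hab, hbp, hc, hfactor⟩ :=
    exists_polyB2_pow_three_sub_polyA_mul_polyB1_sq_eq ha0 hp0 hK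
  refine ⟨(b, c), ⟨⟨hab, hbp, hc, hfactor⟩, fun z => ?_⟩, ?_⟩
  · rw [hfactor, mul_assoc, mul_eq_zero, or_iff_right hKC, sq_sub_sq_mul_sq_add_sq_eq_zero_iff]
  · rintro ⟨b', c'⟩ ⟨⟨hab', -, hc', hfactor'⟩, -⟩
    obtain ⟨hb, hc⟩ := eq_and_eq_of_forall_mul_sq_sub_sq_mul_sq_add_sq hKC (ha0.trans hab) hc.le
      (ha0.trans hab') hc'.le fun z => (hfactor z).symm.trans (hfactor' z)
    exact Prod.ext hb.symm hc.symm

/-- Case I: for `0 < a < 1/√2` and `a < p < √((1+a²)/3)` there are unique `b ∈ (a,p)`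
and `c > 0` with `B₂³ − A·B₁² = (1+a²−3p²)(z²−b²)(z²+c²)`; in particular the zeros of
`B₂³ − A·B₁²` are exactly `±b` and `±ic`. -/
theorem caseI_branch_points (a p : ℝ) (ha0 : 0 < a) (ha1 : a < 1 / Real.sqrt 2)
    (hp0 : a < p) (hp1 : p < Real.sqrt ((1 + a ^ 2) / 3)) :
    ∃! bc : ℝ × ℝ,
      (a < bc.1 ∧ bc.1 < p ∧ 0 < bc.2 ∧
        (∀ z : ℂ, (polyB2 p z) ^ 3 - polyA a z * (polyB1 z) ^ 2
          = (1 + (a : ℂ) ^ 2 - 3 * (p : ℂ) ^ 2) * (z ^ 2 - (bc.1 : ℂ) ^ 2)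
              * (z ^ 2 + (bc.2 : ℂ) ^ 2))) ∧
      (∀ z : ℂ, (polyB2 p z) ^ 3 - polyA a z * (polyB1 z) ^ 2 = 0 ↔
        z = (bc.1 : ℂ) ∨ z = -(bc.1 : ℂ) ∨ z = (bc.2 : ℂ) * Complex.I
          ∨ z = -((bc.2 : ℂ) * Complex.I)) :=
  caseI_branch_points_general a p ha0 hp0 hp1
end

section
/- Let a be real with 1/√2 < a < 1 and set p = √((1+a^2)/3). Then 3p^4 − a^2 > 0, and putting b := p^3/√(3p^4 − a^2) one has p < b < a and, for every complex z, B_2(z)^3 − A(z)B_1(z)^2 = (3p^4 − a^2)(z^2 − b^2); in particular the zeros of B_2^3 − A·B_1^2 are exactly ±b. -/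
open Complex

/-- Case III: for `1/√2 < a < 1` and `p = √((1+a²)/3)` one has `3p⁴ − a² > 0`, and with
`b := p³/√(3p⁴−a²)` one has `p < b < a` and
`B₂³ − A·B₁² = (3p⁴−a²)(z²−b²)`, whose zeros are exactly `±b`. -/
theorem caseIII_branch_points (a p : ℝ) (ha0 : 1 / Real.sqrt 2 < a) (ha1 : a < 1)
    (hp : p = Real.sqrt ((1 + a ^ 2) / 3)) :
    0 < 3 * p ^ 4 - a ^ 2 ∧
    p < p ^ 3 / Real.sqrt (3 * p ^ 4 - a ^ 2) ∧
    p ^ 3 / Real.sqrt (3 * p ^ 4 - a ^ 2) < a ∧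
    (∀ z : ℂ, (polyB2 p z) ^ 3 - polyA a z * (polyB1 z) ^ 2
        = (3 * (p : ℂ) ^ 4 - (a : ℂ) ^ 2)
            * (z ^ 2 - ((p ^ 3 / Real.sqrt (3 * p ^ 4 - a ^ 2) : ℝ) : ℂ) ^ 2)) ∧
    (∀ z : ℂ, (polyB2 p z) ^ 3 - polyA a z * (polyB1 z) ^ 2 = 0 ↔
        z = ((p ^ 3 / Real.sqrt (3 * p ^ 4 - a ^ 2) : ℝ) : ℂ)
          ∨ z = -((p ^ 3 / Real.sqrt (3 * p ^ 4 - a ^ 2) : ℝ) : ℂ)) := by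
  have ha0' : 0 < a := lt_trans (by positivity) ha0
  have ha2 : 1 / 2 < a ^ 2 := by
    have h1 : (1 / Real.sqrt 2) ^ 2 < a ^ 2 := by
      apply pow_lt_pow_left₀ ha0 (by positivity)
      norm_num
    have h2 : (1 / Real.sqrt 2) ^ 2 = 1 / 2 := by
      rw [div_pow, Real.sq_sqrt (by norm_num : (2:ℝ) ≥ 0)]
      norm_num
    linarith [h2 ▸ h1]
  have ha2' : a ^ 2 < 1 := by nlinarith
  have hpnn : 0 ≤ p := hp ▸ Real.sqrt_nonneg _
  have hp2 : p ^ 2 = (1 + a ^ 2) / 3 := by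
    rw [hp, Real.sq_sqrt (by positivity)]
  have hppos : 0 < p := by nlinarith
  have hD : 0 < 3 * p ^ 4 - a ^ 2 := by nlinarith [hp2, sq_nonneg (a^2 - 1)]
  set s := Real.sqrt (3 * p ^ 4 - a ^ 2) with hs
  have hspos : 0 < s := Real.sqrt_pos.mpr hD
  have hs2 : s ^ 2 = 3 * p ^ 4 - a ^ 2 := Real.sq_sqrt hD.le
  set b := p ^ 3 / s with hbdef
  have hbpos : 0 < b := by positivity
  have hb2 : b ^ 2 * (3 * p ^ 4 - a ^ 2) = p ^ 6 := by
    rw [hbdef, div_pow, hs2, div_mul_cancel₀]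
    · ring
    · exact ne_of_gt hD
  have hpb : p < b := by
    have hsp : s < p ^ 2 := by
      have : s ^ 2 < (p ^ 2) ^ 2 := by
        rw [hs2]; nlinarith [hp2]
      nlinarith [hspos]
    rw [hbdef, lt_div_iff₀ hspos]
    nlinarith
  have hba : b < a := by
    rw [hbdef, div_lt_iff₀ hspos]
    have key : (p ^ 3) ^ 2 < (a * s) ^ 2 := by
      have h3 : 0 < 2 * a ^ 2 - 1 := by linarith
      have h4 : 0 < (2 * a ^ 2 - 1) ^ 3 := pow_pos h3 3
      have hp4 : p ^ 4 = ((1 + a ^ 2) / 3) ^ 2 := by rw [show p ^ 4 = (p ^ 2) ^ 2 by ring, hp2]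
      have hp6 : p ^ 6 = ((1 + a ^ 2) / 3) ^ 3 := by rw [show p ^ 6 = (p ^ 2) ^ 3 by ring, hp2]
      nlinarith [hp4, hp6, hs2]
    exact lt_of_pow_lt_pow_left₀ 2 (by positivity) key
  refine ⟨hD, hpb, hba, ?_, ?_⟩
  · intro z
    have h1 : 3 * (p : ℂ) ^ 2 = 1 + (a : ℂ) ^ 2 := by
      have hc : ((p ^ 2 : ℝ) : ℂ) = (((1 + a ^ 2) / 3 : ℝ) : ℂ) := congrArg Complex.ofReal hp2
      push_cast at hc
      linear_combination 3 * hc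
    have h2 : ((b : ℝ) : ℂ) ^ 2 * (3 * (p : ℂ) ^ 4 - (a : ℂ) ^ 2) = (p : ℂ) ^ 6 := by
      exact_mod_cast congrArg (Complex.ofReal) hb2
    simp only [polyA, polyB2, polyB1]
    linear_combination (-z ^ 4) * h1 + h2
  · intro z
    have h1 : 3 * (p : ℂ) ^ 2 = 1 + (a : ℂ) ^ 2 := by
      have hc : ((p ^ 2 : ℝ) : ℂ) = (((1 + a ^ 2) / 3 : ℝ) : ℂ) := congrArg Complex.ofReal hp2
      push_cast at hc
      linear_combination 3 * hc
    have h2 : ((b : ℝ) : ℂ) ^ 2 * (3 * (p : ℂ) ^ 4 - (a : ℂ) ^ 2) = (p : ℂ) ^ 6 := by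
      exact_mod_cast congrArg (Complex.ofReal) hb2
    have hfact : (polyB2 p z) ^ 3 - polyA a z * (polyB1 z) ^ 2
        = (3 * (p : ℂ) ^ 4 - (a : ℂ) ^ 2) * ((z - (b : ℂ)) * (z + (b : ℂ))) := by
      simp only [polyA, polyB2, polyB1]
      linear_combination (-z ^ 4) * h1 + h2
    have hDne : (3 * (p : ℂ) ^ 4 - (a : ℂ) ^ 2) ≠ 0 := by
      have hne : ((3 * p ^ 4 - a ^ 2 : ℝ) : ℂ) ≠ 0 := Complex.ofReal_ne_zero.mpr hD.ne'
      push_cast at hne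
      exact hne
    rw [hfact, mul_eq_zero, mul_eq_zero, or_iff_right hDne, sub_eq_zero,
      add_eq_zero_iff_eq_neg]
end

section
/- Let a, p be real, R > 0, and let h : ℂ → ℂ satisfy A(z)h(z)^3 − 3B_2(z)h(z) − 2B_1(z) = 0 for all |z| > R. If z·h(z) converges to a complex number c as |z| → ∞ (along the cobounded filter on ℂ), then c = 2 or c = −1 (equivalently, (c+1)^2(c−2) = 0). -/
/-! Dividing the equation by `z` and writing `w = z h(z)`, `t = 1/z` turns it into
`(1 - t²)(1 - a²t²) w³ - 3(1 - p²t²) w - 2 = 0`, a polynomial equation in `(t, w)`.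
Letting `z → ∞` gives `c³ - 3c - 2 = (c + 1)²(c - 2) = 0`. -/

open Complex Filter

def rescaledCubic (a p : ℝ) (t w : ℂ) : ℂ :=
  (1 - t ^ 2) * (1 - (a : ℂ) ^ 2 * t ^ 2) * w ^ 3 - 3 * (1 - (p : ℂ) ^ 2 * t ^ 2) * w - 2

lemma continuous_rescaledCubic (a p : ℝ) :
    Continuous fun x : ℂ × ℂ => rescaledCubic a p x.1 x.2 := by
  unfold rescaledCubic
  fun_prop

lemma rescaledCubic_zero_left (a p : ℝ) (w : ℂ) :
    rescaledCubic a p 0 w = w ^ 3 - 3 * w - 2 := by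
  simp [rescaledCubic]

lemma cubic_equation_eq_mul_rescaledCubic (a p : ℝ) {z : ℂ} (hz : z ≠ 0) (u : ℂ) :
    polyA a z * u ^ 3 - 3 * polyB2 p z * u - 2 * polyB1 z
      = z * rescaledCubic a p z⁻¹ (z * u) := by
  simp only [polyA, polyB2, polyB1, rescaledCubic]
  field_simp

lemma eq_two_or_eq_neg_one_of_cubic {c : ℂ} (hc : c ^ 3 - 3 * c - 2 = 0) :
    c = 2 ∨ c = -1 := by
  have hfactor : (c - 2) * (c + 1) ^ 2 = 0 := by linear_combination hc
  rcases mul_eq_zero.mp hfactor with h2 | h1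
  · exact Or.inl (sub_eq_zero.mp h2)
  · exact Or.inr (eq_neg_of_add_eq_zero_left (pow_eq_zero_iff two_ne_zero |>.mp h1))

theorem leading_coefficient_at_infinity_general (a p R : ℝ) (h : ℂ → ℂ) (c : ℂ)
    (heq : ∀ z : ℂ, R < ‖z‖ →
      polyA a z * (h z) ^ 3 - 3 * polyB2 p z * h z - 2 * polyB1 z = 0)
    (hlim : Tendsto (fun z : ℂ => z * h z) (Bornology.cobounded ℂ) (nhds c)) :
    c = 2 ∨ c = -1 := by
  have hrescaled_lim : Tendsto (fun z : ℂ => rescaledCubic a p z⁻¹ (z * h z))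
      (Bornology.cobounded ℂ) (nhds (c ^ 3 - 3 * c - 2)) := by
    have hcont := ((continuous_rescaledCubic a p).tendsto (0, c)).comp
      (tendsto_inv₀_cobounded.prodMk_nhds hlim)
    rwa [rescaledCubic_zero_left] at hcont
  have hrescaled_zero :
      ∀ᶠ z : ℂ in Bornology.cobounded ℂ, rescaledCubic a p z⁻¹ (z * h z) = 0 := by
    filter_upwards [tendsto_norm_cobounded_atTop.eventually_gt_atTop R,
      tendsto_norm_cobounded_atTop.eventually_gt_atTop 0] with z hzR hz0
    have hz : z ≠ 0 := norm_pos_iff.mp hz0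
    have hsolve := heq z hzR
    rw [cubic_equation_eq_mul_rescaledCubic a p hz] at hsolve
    exact (mul_eq_zero.mp hsolve).resolve_left hz
  exact eq_two_or_eq_neg_one_of_cubic <|
    tendsto_nhds_unique hrescaled_lim
      (tendsto_const_nhds.congr' (hrescaled_zero.mono fun _ hz => hz.symm))

/-- If `h` solves `A h³ − 3B₂ h − 2B₁ = 0` for `|z| > R` and `z·h(z) → c` as `|z| → ∞`,
then `c = 2` or `c = −1`. -/
theorem leading_coefficient_at_infinity (a p R : ℝ) (hR : 0 < R) (h : ℂ → ℂ) (c : ℂ)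
    (heq : ∀ z : ℂ, R < ‖z‖ →
      polyA a z * (h z) ^ 3 - 3 * polyB2 p z * h z - 2 * polyB1 z = 0)
    (hlim : Tendsto (fun z : ℂ => z * h z) (Bornology.cobounded ℂ) (nhds c)) :
    c = 2 ∨ c = -1 :=
  leading_coefficient_at_infinity_general a p R h c heq hlim
end

section
/- Let a, p be real, R > 0, and let h : ℂ → ℂ satisfy A(z)h(z)^3 − 3B_2(z)h(z) − 2B_1(z) = 0 for all |z| > R. Suppose that, as |z| → ∞ along the cobounded filter, z·h(z) → −1 and z·(z·h(z)+1) → α for some complex number α. Then 3α^2 = 1 + a^2 − 3p^2. -/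
open Complex Filter

/-!
Put `w = z(zh + 1)` and `u = 1/z`, so that `zh = -1 + wu`. Multiplied by `z`, the equation
`A h³ − 3B₂h − 2B₁ = 0` becomes `F(w, u) = 0` for the polynomial `F = reducedEquation a p`,
whose constant term in `u` is `1 + a² − 3p² − 3w²`; the terms of order `u⁻²` and `u⁻¹` cancel
because `−1` is a double root of `t³ − 3t − 2`, the leading part of the equation for `t = zh`.
Letting `z → ∞`, i.e. `(w, u) → (α, 0)`, continuity of `F` gives `F(α, 0) = 0`.
-/

noncomputable def reducedEquation (a p : ℝ) (w u : ℂ) : ℂ :=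
  1 + (a : ℂ) ^ 2 - 3 * (p : ℂ) ^ 2 - 3 * w ^ 2
    + (w ^ 3 - 3 * (1 + (a : ℂ) ^ 2) * w + 3 * (p : ℂ) ^ 2 * w) * u
    + (3 * (1 + (a : ℂ) ^ 2) * w ^ 2 - (a : ℂ) ^ 2) * u ^ 2
    + (-(1 + (a : ℂ) ^ 2) * w ^ 3 + 3 * (a : ℂ) ^ 2 * w) * u ^ 3
    - 3 * (a : ℂ) ^ 2 * w ^ 2 * u ^ 4
    + (a : ℂ) ^ 2 * w ^ 3 * u ^ 5

theorem reducedEquation_eq (a p : ℝ) {z : ℂ} (hz : z ≠ 0) (y : ℂ) :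
    reducedEquation a p (z * (z * y + 1)) z⁻¹ =
      z * (polyA a z * y ^ 3 - 3 * polyB2 p z * y - 2 * polyB1 z) := by
  simp only [reducedEquation, polyA, polyB2, polyB1]
  field_simp
  ring

theorem reducedEquation_zero (a p : ℝ) (w : ℂ) :
    reducedEquation a p w 0 = 1 + (a : ℂ) ^ 2 - 3 * (p : ℂ) ^ 2 - 3 * w ^ 2 := by
  simp [reducedEquation]

theorem continuous_reducedEquation (a p : ℝ) :
    Continuous fun q : ℂ × ℂ => reducedEquation a p q.1 q.2 := by
  unfold reducedEquation
  fun_prop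

theorem second_coefficient_at_infinity_general (a p R : ℝ) (h : ℂ → ℂ) (α : ℂ)
    (heq : ∀ z : ℂ, R < ‖z‖ →
      polyA a z * (h z) ^ 3 - 3 * polyB2 p z * h z - 2 * polyB1 z = 0)
    (hlim2 : Tendsto (fun z : ℂ => z * (z * h z + 1)) (Bornology.cobounded ℂ) (nhds α)) :
    3 * α ^ 2 = 1 + (a : ℂ) ^ 2 - 3 * (p : ℂ) ^ 2 := by
  have hsol : (fun z : ℂ => reducedEquation a p (z * (z * h z + 1)) z⁻¹)
      =ᶠ[Bornology.cobounded ℂ] fun _ => 0 := by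
    filter_upwards [(tendsto_norm_cobounded_atTop (E := ℂ)).eventually_gt_atTop R,
      Bornology.eventually_ne_cobounded 0] with z hzR hz0
    rw [reducedEquation_eq a p hz0, heq z hzR, mul_zero]
  have hlim := ((continuous_reducedEquation a p).tendsto (α, 0)).comp
      (hlim2.prodMk_nhds (tendsto_inv₀_cobounded (α := ℂ)))
  have hroot := tendsto_nhds_unique_of_eventuallyEq hlim tendsto_const_nhds hsol
  rw [reducedEquation_zero] at hroot
  linear_combination -hroot

/-- If `h` solves `A h³ − 3B₂ h − 2B₁ = 0` for `|z| > R` and has the expansion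
`h(z) = −1/z + α/z² + ⋯` at infinity, then `3α² = 1 + a² − 3p²`. -/
theorem second_coefficient_at_infinity (a p R : ℝ) (hR : 0 < R) (h : ℂ → ℂ) (α : ℂ)
    (heq : ∀ z : ℂ, R < ‖z‖ →
      polyA a z * (h z) ^ 3 - 3 * polyB2 p z * h z - 2 * polyB1 z = 0)
    (hlim1 : Tendsto (fun z : ℂ => z * h z) (Bornology.cobounded ℂ) (nhds (-1)))
    (hlim2 : Tendsto (fun z : ℂ => z * (z * h z + 1)) (Bornology.cobounded ℂ) (nhds α)) :
    3 * α ^ 2 = 1 + (a : ℂ) ^ 2 - 3 * (p : ℂ) ^ 2 :=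
  second_coefficient_at_infinity_general a p R h α heq hlim2
end

section
/- Let a = p = 1/√2, R > 0, and let h : ℂ → ℂ satisfy A(z)h(z)^3 − 3B_2(z)h(z) − 2B_1(z) = 0 for all |z| > R. Suppose that, as |z| → ∞ along the cobounded filter, z·h(z) → −1, z·(z·h(z)+1) → 0, and z^2·(z·h(z)+1) → β for some complex number β. Then β^2 + β + 1/6 = 0. -/
open Complex Filter

/-!
Put `u = z h + 1` and `v = z² u`, so that `h = -1/z + v/z³` with `v → β`. For
`a² = p² = 1/2`, multiplying `A h³ − 3B₂ h − 2B₁` by `z³` gives a polynomial in `u` and `v` alone,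
`caseIIResidual u v`, which therefore vanishes for large `|z|`. Letting `z → ∞`, so that `u → 0`
and `v → β`, gives `caseIIResidual 0 β = -3 (β² + β + 1/6) = 0`.
-/

/-- Irreducible so that unification never unfolds it into arithmetic on complex numerals. -/
@[irreducible] noncomputable def caseIIResidual (u v : ℂ) : ℂ :=
  -(1 / 2) - 3 * v - 3 * v ^ 2 +
    u * (3 / 2 + 9 / 2 * v - 3 / 2 * u + v ^ 2 - 3 / 2 * v * u + 1 / 2 * u ^ 2)

theorem continuous_caseIIResidual : Continuous fun x : ℂ × ℂ => caseIIResidual x.1 x.2 := by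
  unfold caseIIResidual
  fun_prop

theorem Filter.Tendsto.caseIIResidual {α : Type*} {l : Filter α} {u v : α → ℂ} {u₀ v₀ : ℂ}
    (hu : Tendsto u l (nhds u₀)) (hv : Tendsto v l (nhds v₀)) :
    Tendsto (fun x => _root_.caseIIResidual (u x) (v x)) l
      (nhds (_root_.caseIIResidual u₀ v₀)) :=
  (continuous_caseIIResidual.tendsto (u₀, v₀)).comp (hu.prodMk_nhds hv)

theorem caseIIResidual_zero_left (v : ℂ) : caseIIResidual 0 v = -3 * (v ^ 2 + v + 1 / 6) := by
  unfold caseIIResidual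
  ring

theorem ofReal_one_div_sqrt_two_sq : ((1 / Real.sqrt 2 : ℝ) : ℂ) ^ 2 = 1 / 2 := by
  rw [← ofReal_pow, div_pow, one_pow, Real.sq_sqrt zero_le_two]
  push_cast
  rfl

theorem cube_mul_caseII_equation_eq_caseIIResidual (z w : ℂ) :
    z ^ 3 * (polyA (1 / Real.sqrt 2) z * w ^ 3 - 3 * polyB2 (1 / Real.sqrt 2) z * w
      - 2 * polyB1 z) = caseIIResidual (z * w + 1) (z ^ 2 * (z * w + 1)) := by
  simp only [polyA, polyB2, polyB1, caseIIResidual, ofReal_one_div_sqrt_two_sq]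
  ring

theorem caseII_third_coefficient_general (a p R : ℝ) (ha : a = 1 / Real.sqrt 2)
    (hp : p = 1 / Real.sqrt 2) (h : ℂ → ℂ) (β : ℂ)
    (heq : ∀ z : ℂ, R < ‖z‖ →
      polyA a z * (h z) ^ 3 - 3 * polyB2 p z * h z - 2 * polyB1 z = 0)
    (hlim1 : Tendsto (fun z : ℂ => z * h z) (Bornology.cobounded ℂ) (nhds (-1)))
    (hlim3 : Tendsto (fun z : ℂ => z ^ 2 * (z * h z + 1)) (Bornology.cobounded ℂ) (nhds β)) :
    β ^ 2 + β + 1 / 6 = 0 := by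
  subst ha hp
  have hu : Tendsto (fun z => z * h z + 1) (Bornology.cobounded ℂ) (nhds 0) := by
    simpa using hlim1.add_const 1
  have hzero : (fun z => caseIIResidual (z * h z + 1) (z ^ 2 * (z * h z + 1)))
      =ᶠ[Bornology.cobounded ℂ] fun _ => 0 := by
    filter_upwards [tendsto_norm_cobounded_atTop.eventually_gt_atTop R] with z hz
    rw [← cube_mul_caseII_equation_eq_caseIIResidual, heq z hz, mul_zero]
  have hβ : caseIIResidual 0 β = 0 :=
    tendsto_nhds_unique_of_eventuallyEq (hu.caseIIResidual hlim3) tendsto_const_nhds hzero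
  rw [caseIIResidual_zero_left] at hβ
  linear_combination (-1 / 3 : ℂ) * hβ

/-- Case II (`a = p = 1/√2`): if `h` solves `A h³ − 3B₂ h − 2B₁ = 0` for `|z| > R` and has
the expansion `h(z) = −1/z + β/z³ + ⋯` at infinity, then `β² + β + 1/6 = 0`. -/
theorem caseII_third_coefficient (a p R : ℝ) (ha : a = 1 / Real.sqrt 2)
    (hp : p = 1 / Real.sqrt 2) (hR : 0 < R) (h : ℂ → ℂ) (β : ℂ)
    (heq : ∀ z : ℂ, R < ‖z‖ →
      polyA a z * (h z) ^ 3 - 3 * polyB2 p z * h z - 2 * polyB1 z = 0)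
    (hlim1 : Tendsto (fun z : ℂ => z * h z) (Bornology.cobounded ℂ) (nhds (-1)))
    (hlim2 : Tendsto (fun z : ℂ => z * (z * h z + 1)) (Bornology.cobounded ℂ) (nhds 0))
    (hlim3 : Tendsto (fun z : ℂ => z ^ 2 * (z * h z + 1)) (Bornology.cobounded ℂ) (nhds β)) :
    β ^ 2 + β + 1 / 6 = 0 :=
  caseII_third_coefficient_general a p R ha hp h β heq hlim1 hlim3
end

section
/- Let x be real with 1/√2 < x < 1, set s := √(1 − x^2) > 0 and H(x) := (1 + 2x·s)/(2x + √2) > 0, and let ξ be any complex number with ξ^3 = 1. Define h := (1/s)·( −ξ·(x − 1/√2)^{−1/3}·H(x)^{1/3} + ξ^2·(x − 1/√2)^{1/3}·H(x)^{−1/3} ), where all fractional powers are the real (positive) powers of positive real numbers. Then (x^2 − 1)(x^2 − 1/2)·h^3 − 3(x^2 − 1/2)·h − 2x = 0. -/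
open Complex

lemma cubic_key_aux (ξ A B S X U Hc : ℂ) (hξ : ξ^3 = 1) (hAB : A*B = 1)
    (hA3 : A^3 * U = Hc) (hB3 : B^3 * Hc = U) (hS2 : S^2 = 1 - X^2)
    (hk : (2*X^2 - 1) * (U^2 - Hc^2) = -(4*X*S*U*Hc))
    (hS : S ≠ 0) (hU : U ≠ 0) (hH : Hc ≠ 0) :
    (X^2-1)*(X^2-1/2)*((1/S)*(-ξ*A + ξ^2*B))^3
      - 3*(X^2-1/2)*((1/S)*(-ξ*A+ξ^2*B)) - 2*X = 0 := by
  set t : ℂ := -ξ*A + ξ^2*B with ht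
  have ht3 : t^3 = -A^3 + B^3 - 3*t := by
    rw [ht]
    linear_combination (-A^3 + B^3*(ξ^3+1) + 3*ξ*A^2*B - 3*ξ^2*A*B^2) * hξ
      + (3*ξ*A - 3*ξ^2*B) * hAB
  have hkey2 : (X^2 - 1/2)*(A^3 - B^3) = 2*X*S := by
    have h' : (X^2 - 1/2)*(A^3 - B^3) * (U*Hc) = 2*X*S*(U*Hc) := by
      linear_combination ((X^2-1/2)*Hc)*hA3 - ((X^2-1/2)*U)*hB3 - (1/2)*hk
    exact mul_right_cancel₀ (mul_ne_zero hU hH) h'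
  have hG : (X^2-1)*(X^2-1/2)*t^3 - 3*(X^2-1/2)*S^2*t - 2*X*S^3 = 0 := by
    linear_combination ((X^2-1)*(X^2-1/2))*ht3 + (-3*(X^2-1/2)*t - 2*X*S)*hS2
      + (-(X^2-1))*hkey2
  have heq : (X^2-1)*(X^2-1/2)*((1/S)*t)^3 - 3*(X^2-1/2)*((1/S)*t) - 2*X
      = ((X^2-1)*(X^2-1/2)*t^3 - 3*(X^2-1/2)*S^2*t - 2*X*S^3)/S^3 := by
    field_simp
  rw [heq, hG, zero_div]

lemma real_key_aux (x s r : ℝ) (hr2 : r^2 = 2) (hden : 2*x + r ≠ 0) (hr0 : r ≠ 0)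
    (hs2 : s^2 = 1 - x^2) :
    (2*x^2 - 1) * ((x - 1/r)^2 - ((1 + 2*x*s)/(2*x+r))^2)
      = -(4*x*s*(x - 1/r)*((1 + 2*x*s)/(2*x+r))) := by
  set u : ℝ := x - 1/r with hu
  set H : ℝ := (1 + 2*x*s)/(2*x+r) with hH
  have h1 : u * (2*x + r) = 2*x^2 - 1 := by
    rw [hu]; field_simp; linear_combination x * hr2
  have h2 : H * (2*x + r) = 1 + 2*x*s := by
    rw [hH]; field_simp
  have hbr : (2*x^2-1)^2 - (1+2*x*s)^2 + 4*x*s*(1+2*x*s) = 0 := by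
    linear_combination (4*x^2) * hs2
  have h' : (2*x^2-1) * (u^2 - H^2) * (2*x+r)^2 = -(4*x*s*u*H) * (2*x+r)^2 := by
    linear_combination ((2*x^2-1)*(u*(2*x+r)+(2*x^2-1)) + 4*x*s*H*(2*x+r)) * h1
      + (-(2*x^2-1)*(H*(2*x+r)+(1+2*x*s)) + 4*x*s*(2*x^2-1)) * h2
      + (2*x^2-1) * hbr
  exact mul_right_cancel₀ (pow_ne_zero 2 hden) h'

/-- The Puiseux/Cardano expression `h(x;ξ)` from equation (6.3) of the paper solves the
cubic `(x²−1)(x²−1/2)h³ − 3(x²−1/2)h − 2x = 0` (case `a = p = 1/√2`), for real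
`x ∈ (1/√2, 1)` and any cubic root of unity `ξ`. Here all fractional powers are real
powers of positive real numbers. -/
theorem puiseux_solution_caseII (x : ℝ) (hx1 : 1 / Real.sqrt 2 < x) (hx2 : x < 1)
    (ξ : ℂ) (hξ : ξ ^ 3 = 1) :
    let s : ℝ := Real.sqrt (1 - x ^ 2)
    let H : ℝ := (1 + 2 * x * s) / (2 * x + Real.sqrt 2)
    let u : ℝ := x - 1 / Real.sqrt 2
    let h : ℂ := (1 / (s : ℂ)) *
      (-ξ * ((u ^ (-(1 / 3) : ℝ) : ℝ) : ℂ) * ((H ^ ((1 : ℝ) / 3) : ℝ) : ℂ)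
        + ξ ^ 2 * ((u ^ ((1 : ℝ) / 3) : ℝ) : ℂ) * ((H ^ (-(1 / 3) : ℝ) : ℝ) : ℂ))
    ((x : ℂ) ^ 2 - 1) * ((x : ℂ) ^ 2 - 1 / 2) * h ^ 3
      - 3 * ((x : ℂ) ^ 2 - 1 / 2) * h - 2 * (x : ℂ) = 0 := by
  intro s H u h
  have hr0 : (0:ℝ) < Real.sqrt 2 := Real.sqrt_pos.mpr (by norm_num)
  have hr2 : (Real.sqrt 2)^2 = 2 := Real.sq_sqrt (by norm_num)
  have hx0 : 0 < x := lt_trans (by positivity) hx1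
  have hs0 : 0 < s := Real.sqrt_pos.mpr (by nlinarith)
  have hs2 : s^2 = 1 - x^2 := Real.sq_sqrt (by nlinarith)
  have hu0 : 0 < u := sub_pos.mpr hx1
  have hden0 : (0:ℝ) < 2*x + Real.sqrt 2 := by positivity
  have hH0 : 0 < H := div_pos (by nlinarith [mul_pos hx0 hs0]) hden0
  set a : ℝ := u ^ (-(1/3) : ℝ) * H ^ ((1:ℝ)/3) with ha
  set b : ℝ := u ^ ((1:ℝ)/3) * H ^ (-(1/3) : ℝ) with hb
  have hab : a * b = 1 := by
    rw [ha, hb, show (u ^ (-(1/3) : ℝ) * H ^ ((1:ℝ)/3)) * (u ^ ((1:ℝ)/3) * H ^ (-(1/3) : ℝ))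
        = (u ^ (-(1/3) : ℝ) * u ^ ((1:ℝ)/3)) * (H ^ ((1:ℝ)/3) * H ^ (-(1/3) : ℝ)) by ring,
      ← Real.rpow_add hu0, ← Real.rpow_add hH0]
    norm_num
  have ha3 : a^3 * u = H := by
    have h1 : (u ^ (-(1/3) : ℝ))^3 = u⁻¹ := by
      rw [← Real.rpow_natCast (u ^ (-(1/3):ℝ)) 3, ← Real.rpow_mul hu0.le]
      norm_num [Real.rpow_neg_one]
    have h2 : (H ^ ((1:ℝ)/3))^3 = H := by
      rw [← Real.rpow_natCast (H ^ ((1:ℝ)/3)) 3, ← Real.rpow_mul hH0.le]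
      norm_num [Real.rpow_neg_one]
    rw [ha, mul_pow, h1, h2]
    field_simp
  have hb3 : b^3 * H = u := by
    have h1 : (u ^ ((1:ℝ)/3))^3 = u := by
      rw [← Real.rpow_natCast (u ^ ((1:ℝ)/3)) 3, ← Real.rpow_mul hu0.le]
      norm_num [Real.rpow_neg_one]
    have h2 : (H ^ (-(1/3) : ℝ))^3 = H⁻¹ := by
      rw [← Real.rpow_natCast (H ^ (-(1/3):ℝ)) 3, ← Real.rpow_mul hH0.le]
      norm_num [Real.rpow_neg_one]
    rw [hb, mul_pow, h1, h2]
    field_simp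
  have hk : (2*x^2 - 1) * (u^2 - H^2) = -(4*x*s*u*H) :=
    real_key_aux x s (Real.sqrt 2) hr2 hden0.ne' hr0.ne' hs2
  have key := cubic_key_aux ξ (a:ℂ) (b:ℂ) (s:ℂ) (x:ℂ) (u:ℂ) (H:ℂ)
    hξ (by exact_mod_cast hab) (by exact_mod_cast ha3) (by exact_mod_cast hb3)
    (by exact_mod_cast hs2) (by exact_mod_cast hk)
    (by exact_mod_cast hs0.ne') (by exact_mod_cast hu0.ne') (by exact_mod_cast hH0.ne')
  have hh : h = (1/(s:ℂ)) * (-ξ*(a:ℂ) + ξ^2*(b:ℂ)) := by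
    rw [ha, hb]
    push_cast
    ring
  rw [hh]
  linear_combination key
end

section
/- Fix a real number a with 0 < a < 1/√2 and set t₋ := (a^2/(1−a^2))^{1/6}. For every t ∈ (0, t₋), with ã₊(t), ã₋(t), C(t), z(t) as defined in the context, the following two identities hold: C(t)^2·(z(t)^2 − 1) = −1, and i·C(t)^3·(t^3 + t^{−3})·(z(t)^2 − 1)·(z(t)^2 − a^2) = 2·z(t). -/
open Complex

/-- `ã₊(t) := √((1−a²) − a²t⁶)`. -/
noncomputable def aPlus (a t : ℝ) : ℝ := Real.sqrt ((1 - a ^ 2) - a ^ 2 * t ^ 6)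

/-- `ã₋(t) := √(a²t⁻⁶ − (1−a²))`. -/
noncomputable def aMinus (a t : ℝ) : ℝ := Real.sqrt (a ^ 2 / t ^ 6 - (1 - a ^ 2))

/-- `C(t) := (ã₊(t) + i t⁶ ã₋(t)) / ((1−a²)(1+t⁶))`. -/
noncomputable def Cparam (a t : ℝ) : ℂ :=
  ((aPlus a t : ℂ) + Complex.I * (t : ℂ) ^ 6 * (aMinus a t : ℂ))
    / (((1 - a ^ 2 : ℝ) : ℂ) * (1 + (t : ℂ) ^ 6))

/-- `z(t) := (t³/(1−t⁶))(ã₋(t) + i ã₊(t))`. -/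
noncomputable def zparam (a t : ℝ) : ℂ :=
  ((t : ℂ) ^ 3 / (1 - (t : ℂ) ^ 6)) * ((aMinus a t : ℂ) + Complex.I * (aPlus a t : ℂ))

/-!
Put T = t³, p = ã₊ and u = t³ã₋, so that p² = (1−a²) − a²T² and u² = a² − (1−a²)T²; then
C = w/((1−a²)(1+T²)) and z = (u + iTp)/(1−T²) with w = p + iTu. Writing w̄ = p − iTu, one has
(u + iTp)² + w̄² = (1−T²)(u² + p²) = (1−T²)², i.e. z² − 1 = −(w̄/(1−T²))², and
w w̄ = p² + T²u² = (1−a²)(1−T²)(1+T²); these two give C²(z² − 1) = −1. By the first identity the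
second one reduces to −iC(T + 1/T)(z² − a²) = 2z, which comes down to
(1−T²)w − (1+T²)w̄ = 2iT(u + iTp).
-/

section Twist
variable (T p u : ℂ)

theorem twist_sq_add_sq :
    (u + I * T * p) ^ 2 + (p - I * T * u) ^ 2 = (1 - T ^ 2) * (u ^ 2 + p ^ 2) := by
  linear_combination (T ^ 2 * p ^ 2 + T ^ 2 * u ^ 2) * I_sq

theorem twist_mul_conj : (p + I * T * u) * (p - I * T * u) = p ^ 2 + T ^ 2 * u ^ 2 := by
  linear_combination (-T ^ 2 * u ^ 2) * I_sq

theorem twist_sub_twist :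
    (1 - T ^ 2) * (p + I * T * u) - (1 + T ^ 2) * (p - I * T * u) =
      2 * I * T * (u + I * T * p) := by
  linear_combination (-2 * T ^ 2 * p) * I_sq

end Twist

noncomputable def curveC (a T p u : ℂ) : ℂ := (p + I * T * u) / ((1 - a ^ 2) * (1 + T ^ 2))

noncomputable def curveZ (T p u : ℂ) : ℂ := (u + I * T * p) / (1 - T ^ 2)

section Curve
variable {a T p u : ℂ} (hp : p ^ 2 = (1 - a ^ 2) - a ^ 2 * T ^ 2)
  (hu : u ^ 2 = a ^ 2 - (1 - a ^ 2) * T ^ 2)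
include hp hu

theorem curveZ_sq_sub_one (hT : 1 - T ^ 2 ≠ 0) :
    curveZ T p u ^ 2 - 1 = -((p - I * T * u) / (1 - T ^ 2)) ^ 2 := by
  rw [curveZ]
  field_simp
  linear_combination twist_sq_add_sq T p u + (1 - T ^ 2) * (hu + hp)

theorem twist_mul_conj_of_curve :
    (p + I * T * u) * (p - I * T * u) = (1 - a ^ 2) * (1 - T ^ 2) * (1 + T ^ 2) := by
  linear_combination twist_mul_conj T p u + hp + T ^ 2 * hu

theorem curveC_sq_mul_curveZ_sq_sub_one (ha : 1 - a ^ 2 ≠ 0) (hT : 1 - T ^ 2 ≠ 0)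
    (hT' : 1 + T ^ 2 ≠ 0) :
    curveC a T p u ^ 2 * (curveZ T p u ^ 2 - 1) = -1 := by
  have h := twist_mul_conj_of_curve hp hu
  rw [curveZ_sq_sub_one hp hu hT, curveC]
  generalize p + I * T * u = w at h ⊢
  generalize p - I * T * u = w' at h ⊢
  field_simp
  linear_combination (-w * w' - (1 - a ^ 2) * (1 - T ^ 2) * (1 + T ^ 2)) * h

theorem curveC_mul_curveZ_sq_sub_sq (ha : 1 - a ^ 2 ≠ 0) (hT : 1 - T ^ 2 ≠ 0)
    (hT' : 1 + T ^ 2 ≠ 0) (hT0 : T ≠ 0) :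
    -I * curveC a T p u * (T + 1 / T) * (curveZ T p u ^ 2 - a ^ 2) = 2 * curveZ T p u := by
  have h := twist_mul_conj_of_curve hp hu
  have h' := twist_sub_twist T p u
  have hz : curveZ T p u ^ 2 - a ^ 2 = (1 - a ^ 2) - ((p - I * T * u) / (1 - T ^ 2)) ^ 2 := by
    linear_combination curveZ_sq_sub_one hp hu hT
  rw [hz, curveC, curveZ]
  generalize p + I * T * u = w at h h' ⊢
  generalize p - I * T * u = w' at h h' ⊢
  generalize u + I * T * p = x at h' ⊢
  field_simp
  linear_combination I * (1 + T ^ 2) * w' * h - I * (1 + T ^ 2) * (1 - a ^ 2) * (1 - T ^ 2) * h' -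
    2 * (1 + T ^ 2) * (1 - a ^ 2) * (1 - T ^ 2) * T * x * I_sq

theorem curve_vieta (ha : 1 - a ^ 2 ≠ 0) (hT : 1 - T ^ 2 ≠ 0) (hT' : 1 + T ^ 2 ≠ 0)
    (hT0 : T ≠ 0) :
    I * curveC a T p u ^ 3 * (T + 1 / T) * (curveZ T p u ^ 2 - 1) * (curveZ T p u ^ 2 - a ^ 2) =
      2 * curveZ T p u := by
  linear_combination (I * curveC a T p u * (T + 1 / T) * (curveZ T p u ^ 2 - a ^ 2)) *
      curveC_sq_mul_curveZ_sq_sub_one hp hu ha hT hT' +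
    curveC_mul_curveZ_sq_sub_sq hp hu ha hT hT' hT0

end Curve

theorem sq_lt_half_of_lt_one_div_sqrt_two {a : ℝ} (ha0 : 0 ≤ a) (ha1 : a < 1 / √2) :
    a ^ 2 < 1 / 2 := by
  rwa [one_div, ← Real.sqrt_inv, Real.lt_sqrt ha0, ← one_div] at ha1

theorem aPlus_sq {a t : ℝ} (h : a ^ 2 * t ^ 6 ≤ 1 - a ^ 2) :
    aPlus a t ^ 2 = 1 - a ^ 2 - a ^ 2 * (t ^ 3) ^ 2 := by
  rw [aPlus, Real.sq_sqrt (by linarith)]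
  ring

theorem mul_aMinus_sq {a t : ℝ} (ht : 0 < t) (h : (1 - a ^ 2) * t ^ 6 ≤ a ^ 2) :
    (t ^ 3 * aMinus a t) ^ 2 = a ^ 2 - (1 - a ^ 2) * (t ^ 3) ^ 2 := by
  have ht6 : 0 < t ^ 6 := by positivity
  rw [mul_pow, aMinus, Real.sq_sqrt (by rw [sub_nonneg, le_div_iff₀ ht6]; linarith)]
  field_simp

theorem Cparam_eq_curveC (a t : ℝ) :
    Cparam a t = curveC a ((t : ℂ) ^ 3) (aPlus a t) ((t : ℂ) ^ 3 * aMinus a t) := by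
  rw [Cparam, curveC]
  push_cast
  ring

theorem zparam_eq_curveZ (a t : ℝ) :
    zparam a t = curveZ ((t : ℂ) ^ 3) (aPlus a t) ((t : ℂ) ^ 3 * aMinus a t) := by
  rw [zparam, curveZ]
  ring

/-- The Vieta identities (after equation (6.18) of the paper) verifying the
parametrization of the curve `(z²−1)(z²−a²)h³ − 3(z²−a²)h − 2z = 0`:
`C(t)²(z(t)²−1) = −1` and `i C(t)³ (t³+t⁻³)(z(t)²−1)(z(t)²−a²) = 2 z(t)`. -/
theorem vieta_identities (a : ℝ) (ha0 : 0 < a) (ha1 : a < 1 / Real.sqrt 2)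
    (t : ℝ) (ht0 : 0 < t) (ht1 : t < (a ^ 2 / (1 - a ^ 2)) ^ ((1 : ℝ) / 6)) :
    (Cparam a t) ^ 2 * ((zparam a t) ^ 2 - 1) = -1 ∧
    Complex.I * (Cparam a t) ^ 3 * ((t : ℂ) ^ 3 + 1 / (t : ℂ) ^ 3)
        * ((zparam a t) ^ 2 - 1) * ((zparam a t) ^ 2 - (a : ℂ) ^ 2)
      = 2 * zparam a t := by
  have ha2 : a ^ 2 < 1 / 2 := sq_lt_half_of_lt_one_div_sqrt_two ha0.le ha1
  have hb : 0 < 1 - a ^ 2 := by linarith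
  have ht6 : (1 - a ^ 2) * t ^ 6 < a ^ 2 := by
    have h := (Real.lt_rpow_inv_iff_of_pos (y := a ^ 2 / (1 - a ^ 2)) ht0.le (by positivity)
      (by norm_num : (0 : ℝ) < 6)).1 (by rwa [one_div] at ht1)
    rw [Real.rpow_ofNat, lt_div_iff₀ hb] at h
    linarith
  have ht6_lt_one : t ^ 6 < 1 := by nlinarith
  have hpC : (aPlus a t : ℂ) ^ 2 = 1 - (a : ℂ) ^ 2 - (a : ℂ) ^ 2 * ((t : ℂ) ^ 3) ^ 2 := by
    exact_mod_cast aPlus_sq (by nlinarith)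
  have huC : ((t : ℂ) ^ 3 * aMinus a t) ^ 2 =
      (a : ℂ) ^ 2 - (1 - (a : ℂ) ^ 2) * ((t : ℂ) ^ 3) ^ 2 := by
    exact_mod_cast mul_aMinus_sq ht0 ht6.le
  have hbC : 1 - (a : ℂ) ^ 2 ≠ 0 := by exact_mod_cast hb.ne'
  have hDC : 1 - ((t : ℂ) ^ 3) ^ 2 ≠ 0 := by
    exact_mod_cast (by nlinarith : (1 : ℝ) - (t ^ 3) ^ 2 ≠ 0)
  have hD'C : 1 + ((t : ℂ) ^ 3) ^ 2 ≠ 0 := by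
    exact_mod_cast (by positivity : (1 : ℝ) + (t ^ 3) ^ 2 ≠ 0)
  have hTC : (t : ℂ) ^ 3 ≠ 0 := by exact_mod_cast (by positivity : t ^ 3 ≠ 0)
  rw [Cparam_eq_curveC, zparam_eq_curveZ]
  exact ⟨curveC_sq_mul_curveZ_sq_sub_one hpC huC hbC hDC hD'C,
    curve_vieta hpC huC hbC hDC hD'C hTC⟩
end

section
/- Fix a real number a with 0 < a < 1/√2 and set t₋ := (a^2/(1−a^2))^{1/6}. Then the curve z(t) defined in the context satisfies: (i) z(t) → a as t → 0 from the right; (ii) z(t₋) = i·a/√(1 − 2a^2); and (iii) a/√(1 − 2a^2) > a^2/√(1 − 2a^2), i.e., the endpoint z(t₋) lies strictly above the point i·a^2/√(1 − 2a^2) on the imaginary axis. -/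
open Complex

/-!
The factor `t³` absorbs the singularity of `ã₋` at `t = 0`: for `t > 0`,
`t³ ã₋(t) = √(a² − (1−a²)t⁶)`, so `z` agrees on `(0, ∞)` with a function continuous at `0`
whose value there is `√(a²) = a`. At `t₋` we have `t₋⁶ = a²/(1−a²)`, so `ã₋(t₋) = 0`, and
`z(t₋) = i t₋³ ã₊(t₋)/(1 − t₋⁶)` simplifies to `i a/√(1−2a²)`. Finally `a² < a` as `0 < a < 1`.
-/

open Filter Topology

lemma one_sub_two_mul_sq_pos {a : ℝ} (ha0 : 0 ≤ a) (ha : a < 1 / √2) : 0 < 1 - 2 * a ^ 2 := by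
  have h := pow_lt_pow_left₀ ha ha0 two_ne_zero
  rw [div_pow, one_pow, Real.sq_sqrt zero_le_two] at h
  linarith

lemma mul_sqrt_div_sq_sub {x : ℝ} (hx : 0 < x) (b c : ℝ) :
    x * √(c / x ^ 2 - b) = √(c - b * x ^ 2) := by
  rw [show c - b * x ^ 2 = x ^ 2 * (c / x ^ 2 - b) by field_simp, Real.sqrt_mul (sq_nonneg x),
    Real.sqrt_sq hx.le]

lemma zparam_eq_of_pos (a : ℝ) {t : ℝ} (ht : 0 < t) :
    zparam a t = (1 - (t : ℂ) ^ 6)⁻¹ *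
      (√(a ^ 2 - (1 - a ^ 2) * t ^ 6) + I * ((t : ℂ) ^ 3 * aPlus a t)) := by
  have h := mul_sqrt_div_sq_sub (pow_pos ht 3) (1 - a ^ 2) (a ^ 2)
  rw [← pow_mul] at h
  rw [zparam, aMinus, ← h]
  push_cast
  ring

lemma tendsto_zparam_nhdsGT_zero {a : ℝ} (ha : 0 ≤ a) :
    Tendsto (zparam a) (𝓝[>] 0) (𝓝 a) := by
  set g : ℝ → ℂ := fun t ↦ (1 - (t : ℂ) ^ 6)⁻¹ *
    (√(a ^ 2 - (1 - a ^ 2) * t ^ 6) + I * ((t : ℂ) ^ 3 * aPlus a t))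
  have hg0 : g 0 = a := by simp [g, Real.sqrt_sq ha]
  have hg : ContinuousAt g 0 := by
    unfold g aPlus
    refine ContinuousAt.mul ?_ (by fun_prop)
    exact (continuousAt_const.sub (by fun_prop)).inv₀ (by simp)
  refine (hg0 ▸ hg.tendsto.mono_left nhdsWithin_le_nhds).congr' ?_
  filter_upwards [self_mem_nhdsWithin] with t ht
  exact (zparam_eq_of_pos a ht).symm

lemma zparam_of_aMinus_eq_zero {a t : ℝ} (h : aMinus a t = 0) :
    zparam a t = I * ((t ^ 3 / (1 - t ^ 6) * aPlus a t : ℝ) : ℂ) := by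
  rw [zparam, h]
  push_cast
  ring

lemma div_sqrt_div_div_mul_sqrt_div_sqrt {b c : ℝ} (hb : 0 < b) (hc : 0 < c) (x : ℝ) :
    x / √b / (c / b) * (√c / √b) = x / √c := by
  have hb' := Real.sqrt_pos.2 hb
  have hc' := Real.sqrt_pos.2 hc
  field_simp
  rw [Real.sq_sqrt hb.le, Real.sq_sqrt hc.le]

lemma zparam_rpow_one_div_six {a : ℝ} (ha : 0 < a) (hc : 0 < 1 - 2 * a ^ 2) :
    zparam a ((a ^ 2 / (1 - a ^ 2)) ^ ((1 : ℝ) / 6)) = I * ((a / √(1 - 2 * a ^ 2) : ℝ) : ℂ) := by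
  set b := 1 - a ^ 2
  have hb : 0 < b := by linarith [sq_nonneg a]
  set t := (a ^ 2 / b) ^ ((1 : ℝ) / 6)
  have ht6 : t ^ 6 = a ^ 2 / b := by
    simp only [t, one_div]
    exact_mod_cast Real.rpow_inv_natCast_pow (by positivity) (by norm_num)
  have ht3 : t ^ 3 = a / √b := by
    rw [← Real.sqrt_sq (by positivity : 0 ≤ t ^ 3), ← pow_mul, ht6, Real.sqrt_div (sq_nonneg a),
      Real.sqrt_sq ha.le]
  have hMinus : aMinus a t = 0 := by
    rw [aMinus, ht6, div_div_cancel₀ (by positivity), sub_self, Real.sqrt_zero]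
  have hPlus : aPlus a t = √(1 - 2 * a ^ 2) / √b := by
    rw [aPlus, ht6, ← Real.sqrt_div hc.le]
    congr 1
    field_simp
    ring
  have hDenom : 1 - a ^ 2 / b = (1 - 2 * a ^ 2) / b := by
    field_simp
    ring
  rw [zparam_of_aMinus_eq_zero hMinus, ht3, ht6, hPlus, hDenom,
    div_sqrt_div_div_mul_sqrt_div_sqrt hb hc]

/-- Endpoint behavior of the arc `z(t)`, `t ∈ (0, t₋]`, with `t₋ = (a²/(1−a²))^{1/6}`:
(i) `z(t) → a` as `t → 0⁺`; (ii) `z(t₋) = i a/√(1−2a²)`;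
(iii) `a/√(1−2a²) > a²/√(1−2a²)`. -/
theorem arc_endpoints (a : ℝ) (ha0 : 0 < a) (ha1 : a < 1 / Real.sqrt 2) :
    Filter.Tendsto (zparam a) (nhdsWithin 0 (Set.Ioi 0)) (nhds (a : ℂ)) ∧
    zparam a ((a ^ 2 / (1 - a ^ 2)) ^ ((1 : ℝ) / 6))
      = Complex.I * ((a / Real.sqrt (1 - 2 * a ^ 2) : ℝ) : ℂ) ∧
    a ^ 2 / Real.sqrt (1 - 2 * a ^ 2) < a / Real.sqrt (1 - 2 * a ^ 2) := by
  have hc := one_sub_two_mul_sq_pos ha0.le ha1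
  have ha_lt_one : a < 1 := by nlinarith
  exact ⟨tendsto_zparam_nhdsGT_zero ha0.le, zparam_rpow_one_div_six ha0 hc,
    div_lt_div_of_pos_right (pow_lt_self_of_lt_one₀ ha0 ha_lt_one one_lt_two)
      (Real.sqrt_pos.2 hc)⟩
end

section
/- Let α < β be real numbers, F = [α, β], let ρ : ℝ → ℂ be continuous on F, and define f(z) := (1/(2πi)) ∫_α^β ρ(x)/(x − z) dx for z ∈ ℂ \ F. Let Q be a complex polynomial and m a natural number. Then the following are equivalent: (i) there exists a complex polynomial P such that z^{m+1}·(Q(z)f(z) − P(z)) remains bounded as |z| → ∞ (i.e., Q·f − P = O(z^{−m−1}) along the cobounded filter); (ii) ∫_α^β x^k·Q(x)·ρ(x) dx = 0 for every integer k with 0 ≤ k ≤ m−1. -/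
/-!
With `C_g(z) = ∫ g(x) / (x - z) dx`, the identity `x / (x - z) = 1 + z / (x - z)` gives
`zⁿ C_g(z) = C_{xⁿ g}(z) - ∑_{j<n} μⱼ(g) zⁿ⁻¹⁻ʲ`, hence `Q(z) C_ρ(z) = C_{Qρ}(z) + R(z)` for a
polynomial `R`, while `z C_g(z)` stays bounded. A polynomial tending to `0` at infinity vanishes, so
the only candidate for `P` is `(2πi)⁻¹ R`, and then `z^{m+1} C_{Qρ}(z)` is bounded exactly when the
polynomial `z ∑_{j<m} μⱼ(Qρ) zᵐ⁻¹⁻ʲ` is, i.e. when the moments `μⱼ(Qρ)`, `j < m`, vanish.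
-/

open Complex Filter intervalIntegral Asymptotics Bornology Polynomial Set Topology

section PolynomialAtInfinity

variable {𝕜 : Type*} [NontriviallyNormedField 𝕜]

theorem Polynomial.eq_zero_of_tendsto_eval_cobounded {p : 𝕜[X]}
    (hp : Tendsto p.eval (cobounded 𝕜) (𝓝 0)) : p = 0 := by
  by_cases hdeg : 0 < p.degree
  · exact absurd (p.tendsto_norm_atTop hdeg tendsto_norm_cobounded_atTop)
      (not_tendsto_atTop_of_tendsto_nhds hp.norm)
  · rw [eq_C_of_degree_le_zero (not_lt.mp hdeg)] at hp ⊢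
    simpa using hp

theorem tendsto_zero_of_isBigO_pow_mul {n : ℕ} (hn : n ≠ 0) {h : 𝕜 → 𝕜}
    (hh : (fun z => z ^ n * h z) =O[cobounded 𝕜] (fun _ => (1 : 𝕜))) :
    Tendsto h (cobounded 𝕜) (𝓝 0) := by
  have hinv : Tendsto (fun z : 𝕜 => (z ^ n)⁻¹) (cobounded 𝕜) (𝓝 0) :=
    tendsto_inv₀_cobounded.comp (tendsto_pow_cobounded_cobounded hn)
  refine (hinv.zero_mul_isBoundedUnder_le ((isBigO_one_iff 𝕜).mp hh)).congr' ?_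
  filter_upwards [eventually_ne_cobounded 0] with z hz
  simp [hz]

theorem exists_polynomial_isBigO_pow_mul_add_sub_iff {φ : 𝕜 → 𝕜}
    (hφ : Tendsto φ (cobounded 𝕜) (𝓝 0)) (S : 𝕜[X]) (n : ℕ) :
    (∃ P : 𝕜[X], (fun z => z ^ (n + 1) * (φ z + S.eval z - P.eval z))
        =O[cobounded 𝕜] (fun _ => (1 : 𝕜))) ↔
      (fun z => z ^ (n + 1) * φ z) =O[cobounded 𝕜] (fun _ => (1 : 𝕜)) := by
  refine ⟨fun ⟨P, hP⟩ => ?_, fun h => ⟨S, by simpa using h⟩⟩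
  have hSP : S - P = 0 := by
    refine eq_zero_of_tendsto_eval_cobounded ?_
    have hlim := (tendsto_zero_of_isBigO_pow_mul n.succ_ne_zero hP).sub hφ
    rw [sub_zero] at hlim
    refine hlim.congr fun z => ?_
    simp only [eval_sub]
    ring
  rw [sub_eq_zero] at hSP
  simpa [hSP] using hP

end PolynomialAtInfinity

section CauchyTransform

variable {α β : ℝ} {g g₁ g₂ : ℝ → ℂ} {z : ℂ}

/-- Normalised without the factor `(2πi)⁻¹`. -/
noncomputable def cauchyTransform (α β : ℝ) (g : ℝ → ℂ) (z : ℂ) : ℂ :=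
  ∫ x in α..β, g x / ((x : ℂ) - z)

noncomputable def intervalMoment (α β : ℝ) (g : ℝ → ℂ) (k : ℕ) : ℂ :=
  ∫ x in α..β, (x : ℂ) ^ k * g x

/-- `∑ j < n, μⱼ Xⁿ⁻¹⁻ʲ` in Horner form, where `μⱼ = intervalMoment α β g j`. -/
noncomputable def momentPoly (α β : ℝ) (g : ℝ → ℂ) : ℕ → ℂ[X]
  | 0 => 0
  | n + 1 => X * momentPoly α β g n + C (intervalMoment α β g n)

theorem momentPoly_eq_zero_iff {n : ℕ} :
    momentPoly α β g n = 0 ↔ ∀ k < n, intervalMoment α β g k = 0 := by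
  induction n with
  | zero => simp [momentPoly]
  | succ n ih =>
    rw [Nat.forall_lt_succ_right, ← ih, momentPoly]
    constructor
    · intro h
      have hμ : intervalMoment α β g n = 0 := by simpa using congrArg (coeff · 0) h
      exact ⟨by simpa [hμ, X_ne_zero] using h, hμ⟩
    · rintro ⟨h, hμ⟩
      simp [h, hμ]

theorem eventually_notMem_image_uIcc (α β : ℝ) :
    ∀ᶠ z in cobounded ℂ, z ∉ ((↑) '' uIcc α β : Set ℂ) :=
  isBounded_def.mp (isCompact_uIcc.image continuous_ofReal).isBounded

theorem ContinuousOn.intervalIntegrable_div_sub (hg : ContinuousOn g (uIcc α β))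
    (hz : z ∉ ((↑) '' uIcc α β : Set ℂ)) :
    IntervalIntegrable (fun x => g x / ((x : ℂ) - z)) MeasureTheory.volume α β :=
  (hg.div (by fun_prop) fun x hx h => hz ⟨x, hx, sub_eq_zero.mp h⟩).intervalIntegrable

theorem cauchyTransform_add (hg₁ : ContinuousOn g₁ (uIcc α β)) (hg₂ : ContinuousOn g₂ (uIcc α β))
    (hz : z ∉ ((↑) '' uIcc α β : Set ℂ)) :
    cauchyTransform α β (fun x => g₁ x + g₂ x) z =
      cauchyTransform α β g₁ z + cauchyTransform α β g₂ z := by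
  simp only [cauchyTransform, add_div]
  exact integral_add (hg₁.intervalIntegrable_div_sub hz) (hg₂.intervalIntegrable_div_sub hz)

theorem cauchyTransform_const_mul (a : ℂ) :
    cauchyTransform α β (fun x => a * g x) z = a * cauchyTransform α β g z := by
  simp only [cauchyTransform, mul_div_assoc, integral_const_mul]

theorem cauchyTransform_ofReal_mul (hg : ContinuousOn g (uIcc α β))
    (hz : z ∉ ((↑) '' uIcc α β : Set ℂ)) :
    cauchyTransform α β (fun x => x * g x) z =
      (∫ x in α..β, g x) + z * cauchyTransform α β g z := by
  rw [cauchyTransform, cauchyTransform, ← integral_const_mul,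
    ← integral_add hg.intervalIntegrable ((hg.intervalIntegrable_div_sub hz).const_mul z)]
  refine integral_congr fun x hx => ?_
  have hxz : (x : ℂ) - z ≠ 0 := sub_ne_zero.mpr fun h => hz ⟨x, hx, h⟩
  field_simp
  ring

theorem pow_mul_cauchyTransform (hg : ContinuousOn g (uIcc α β))
    (hz : z ∉ ((↑) '' uIcc α β : Set ℂ)) (n : ℕ) :
    z ^ n * cauchyTransform α β g z =
      cauchyTransform α β (fun x => (x : ℂ) ^ n * g x) z - (momentPoly α β g n).eval z := by
  induction n with
  | zero => simp [momentPoly]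
  | succ n ih =>
    have hstep := cauchyTransform_ofReal_mul (g := fun x => (x : ℂ) ^ n * g x) (by fun_prop) hz
    simp only [← mul_assoc, ← pow_succ'] at hstep
    rw [pow_succ', mul_assoc, ih, hstep, momentPoly, intervalMoment]
    simp only [eval_add, eval_mul, eval_X, eval_C]
    ring

theorem exists_eval_mul_cauchyTransform (hg : ContinuousOn g (uIcc α β)) (Q : ℂ[X]) :
    ∃ R : ℂ[X], ∀ z ∉ ((↑) '' uIcc α β : Set ℂ),
      Q.eval z * cauchyTransform α β g z =
        cauchyTransform α β (fun x => Q.eval (x : ℂ) * g x) z + R.eval z := by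
  induction Q using Polynomial.induction_on' with
  | add p q hp hq =>
    obtain ⟨Rp, hRp⟩ := hp
    obtain ⟨Rq, hRq⟩ := hq
    refine ⟨Rp + Rq, fun z hz => ?_⟩
    simp only [eval_add, add_mul]
    rw [cauchyTransform_add (by fun_prop) (by fun_prop) hz, hRp z hz, hRq z hz]
    ring
  | monomial n a =>
    refine ⟨-C a * momentPoly α β g n, fun z hz => ?_⟩
    simp only [eval_monomial, eval_mul, eval_neg, eval_C, mul_assoc]
    rw [cauchyTransform_const_mul, pow_mul_cauchyTransform hg hz]
    ring

theorem isBigO_mul_cauchyTransform (hg : ContinuousOn g (uIcc α β)) :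
    (fun z => z * cauchyTransform α β g z) =O[cobounded ℂ] (fun _ => (1 : ℂ)) := by
  obtain ⟨M, hM⟩ := isCompact_uIcc.exists_bound_of_continuousOn hg
  obtain ⟨r, hr⟩ := (isCompact_uIcc (a := α) (b := β)).exists_bound_of_continuousOn
    continuous_ofReal.continuousOn
  refine (isBigO_one_iff ℂ).mpr (isBoundedUnder_of_eventually_le (a := M * 2 * |β - α|) ?_)
  filter_upwards [eventually_cobounded_le_norm (2 * r + 1)] with z hz
  rw [cauchyTransform, ← integral_const_mul]
  refine norm_integral_le_of_norm_le_const fun x hx => ?_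
  have hx' := uIoc_subset_uIcc hx
  have hxz : ‖z‖ ≤ 2 * ‖(x : ℂ) - z‖ := by
    have := norm_sub_norm_le z (x : ℂ)
    rw [norm_sub_rev] at this
    linarith [hr x hx']
  have hxz' : 0 < ‖(x : ℂ) - z‖ := by linarith [norm_nonneg (x : ℂ), hr x hx']
  calc ‖z * (g x / ((x : ℂ) - z))‖ = ‖g x‖ * (‖z‖ / ‖(x : ℂ) - z‖) := by
        rw [norm_mul, norm_div]; ring
    _ ≤ M * 2 := mul_le_mul (hM x hx') ((div_le_iff₀ hxz').mpr hxz) (by positivity)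
        ((norm_nonneg _).trans (hM x hx'))

theorem tendsto_cauchyTransform (hg : ContinuousOn g (uIcc α β)) :
    Tendsto (cauchyTransform α β g) (cobounded ℂ) (𝓝 0) :=
  tendsto_zero_of_isBigO_pow_mul one_ne_zero (by simpa using isBigO_mul_cauchyTransform hg)

theorem isBigO_pow_succ_mul_cauchyTransform_iff (hg : ContinuousOn g (uIcc α β)) (m : ℕ) :
    (fun z => z ^ (m + 1) * cauchyTransform α β g z) =O[cobounded ℂ] (fun _ => (1 : ℂ)) ↔
      momentPoly α β g m = 0 := by
  have hdecay := isBigO_mul_cauchyTransform (g := fun x => (x : ℂ) ^ m * g x) (by fun_prop)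
  have hlaurent : (fun z => z ^ (m + 1) * cauchyTransform α β g z) =ᶠ[cobounded ℂ]
      fun z => z * cauchyTransform α β (fun x => (x : ℂ) ^ m * g x) z -
        z * (momentPoly α β g m).eval z := by
    filter_upwards [eventually_notMem_image_uIcc α β] with z hz
    rw [pow_succ', mul_assoc, pow_mul_cauchyTransform hg hz, mul_sub]
  rw [isBigO_congr hlaurent EventuallyEq.rfl]
  refine ⟨fun h => eq_zero_of_tendsto_eval_cobounded ?_, fun h => by simpa [h] using hdecay⟩
  exact tendsto_zero_of_isBigO_pow_mul one_ne_zero (by simpa using hdecay.sub h)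

end CauchyTransform

/-- Equivalence of the Hermite–Padé interpolation conditions with the non-Hermitian
orthogonality relations: for `f` the Cauchy transform of a continuous density `ρ` on
`F = [α,β]`, a polynomial `Q` admits a polynomial `P` with
`Q·f − P = O(z^{−m−1})` as `|z| → ∞` if and only if
`∫ xᵏ Q(x) ρ(x) dx = 0` for `0 ≤ k ≤ m−1`. -/
theorem interpolation_iff_orthogonality (α β : ℝ) (hab : α < β) (ρ : ℝ → ℂ)
    (hρ : ContinuousOn ρ (Set.Icc α β)) (Q : Polynomial ℂ) (m : ℕ) :
    (∃ P : Polynomial ℂ,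
      Filter.IsBoundedUnder (· ≤ ·) (Bornology.cobounded ℂ)
        (fun z : ℂ => ‖z ^ (m + 1) *
          (Q.eval z * ((2 * (Real.pi : ℂ) * Complex.I)⁻¹ * ∫ x in α..β, ρ x / ((x : ℂ) - z))
            - P.eval z)‖)) ↔
    (∀ k : ℕ, k < m → (∫ x in α..β, (x : ℂ) ^ k * Q.eval (x : ℂ) * ρ x) = 0) := by
  set c : ℂ := (2 * (Real.pi : ℂ) * Complex.I)⁻¹
  have hc : c ≠ 0 := by simp [c, Real.pi_ne_zero, I_ne_zero]
  have hρ' : ContinuousOn ρ (uIcc α β) := by rwa [uIcc_of_le hab.le]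
  set g : ℝ → ℂ := fun x => Q.eval (x : ℂ) * ρ x
  have hg : ContinuousOn g (uIcc α β) := by fun_prop
  obtain ⟨R, hR⟩ := exists_eval_mul_cauchyTransform hρ' Q
  have hf (P : ℂ[X]) : (fun z => z ^ (m + 1) *
      (Q.eval z * (c * ∫ x in α..β, ρ x / ((x : ℂ) - z)) - P.eval z)) =ᶠ[cobounded ℂ]
      fun z => z ^ (m + 1) * (c * cauchyTransform α β g z + (C c * R).eval z - P.eval z) := by
    filter_upwards [eventually_notMem_image_uIcc α β] with z hz
    rw [mul_left_comm, ← cauchyTransform, hR z hz, eval_mul, eval_C, mul_add]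
  simp_rw [← isBigO_one_iff ℂ]
  calc _ ↔ ∃ P : ℂ[X], (fun z => z ^ (m + 1) *
          (c * cauchyTransform α β g z + (C c * R).eval z - P.eval z))
            =O[cobounded ℂ] (fun _ => (1 : ℂ)) :=
        exists_congr fun P => isBigO_congr (hf P) EventuallyEq.rfl
    _ ↔ (fun z => z ^ (m + 1) * (c * cauchyTransform α β g z))
          =O[cobounded ℂ] (fun _ => (1 : ℂ)) :=
        exists_polynomial_isBigO_pow_mul_add_sub_iff
          (by simpa using (tendsto_cauchyTransform hg).const_mul c) _ m
    _ ↔ (fun z => z ^ (m + 1) * cauchyTransform α β g z)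
          =O[cobounded ℂ] (fun _ => (1 : ℂ)) := by
        simp_rw [mul_left_comm _ c]
        exact isBigO_const_mul_left_iff hc
    _ ↔ momentPoly α β g m = 0 := isBigO_pow_succ_mul_cauchyTransform_iff hg m
    _ ↔ _ := by simp only [momentPoly_eq_zero_iff, intervalMoment, g, mul_assoc]
end

section
/- Let α < β be real numbers, F = [α, β], let ρ : ℝ → ℂ be continuous on F, let Q be a complex polynomial and m a natural number such that ∫_α^β x^k·Q(x)·ρ(x) dx = 0 for every 0 ≤ k ≤ m−1. Define R(z) := (1/(2πi)) ∫_α^β Q(x)·ρ(x)/(x − z) dx for z ∈ ℂ \ F. Then for every z ∈ ℂ \ F with z ≠ 0, R(z) = z^{−m}·(1/(2πi)) ∫_α^β x^m·Q(x)·ρ(x)/(x − z) dx, and consequently z^{m+1}·R(z) remains bounded as |z| → ∞ (i.e., R = O(z^{−m−1}) along the cobounded filter). -/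
open Complex Filter intervalIntegral

/-- Decay of the linearized error: if the first `m` moments of `Q·ρ` on `F = [α,β]`
vanish, then the Cauchy transform `R` of `Q·ρ` satisfies
`R(z) = z^{−m}·(1/2πi)∫ xᵐ Q(x)ρ(x)/(x−z) dx` off `F ∪ {0}`, and
`z^{m+1}·R(z)` remains bounded as `|z| → ∞`. -/
theorem remainder_decay (α β : ℝ) (hab : α < β) (ρ : ℝ → ℂ)
    (hρ : ContinuousOn ρ (Set.Icc α β)) (Q : Polynomial ℂ) (m : ℕ)
    (horth : ∀ k : ℕ, k < m → (∫ x in α..β, (x : ℂ) ^ k * Q.eval (x : ℂ) * ρ x) = 0) :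
    let R : ℂ → ℂ := fun z =>
      (2 * (Real.pi : ℂ) * Complex.I)⁻¹ * ∫ x in α..β, Q.eval (x : ℂ) * ρ x / ((x : ℂ) - z)
    (∀ z : ℂ, z ∉ (fun x : ℝ => (x : ℂ)) '' Set.Icc α β → z ≠ 0 →
        R z = z ^ (-(m : ℤ)) *
          ((2 * (Real.pi : ℂ) * Complex.I)⁻¹
            * ∫ x in α..β, (x : ℂ) ^ m * Q.eval (x : ℂ) * ρ x / ((x : ℂ) - z))) ∧
    Filter.IsBoundedUnder (· ≤ ·) (Bornology.cobounded ℂ)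
      (fun z : ℂ => ‖z ^ (m + 1) * R z‖) := by
  intro R
  have hab' : α ≤ β := hab.le
  have huIcc : Set.uIcc α β = Set.Icc α β := Set.uIcc_of_le hab'
  have hQc : Continuous (fun x : ℝ => Q.eval (x : ℂ)) :=
    Q.continuous_aeval.comp Complex.continuous_ofReal
  have hcontk : ∀ k : ℕ,
      ContinuousOn (fun x : ℝ => (x : ℂ) ^ k * Q.eval (x : ℂ) * ρ x) (Set.Icc α β) := by
    intro k
    exact (((Complex.continuous_ofReal.pow k).mul hQc).continuousOn).mul hρ
  have hintk : ∀ k : ℕ, IntervalIntegrable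
      (fun x : ℝ => (x : ℂ) ^ k * Q.eval (x : ℂ) * ρ x) MeasureTheory.volume α β := by
    intro k
    apply ContinuousOn.intervalIntegrable
    rw [huIcc]; exact hcontk k
  -- the key identity
  have key : ∀ z : ℂ, z ∉ (fun x : ℝ => (x : ℂ)) '' Set.Icc α β → z ≠ 0 →
      (∫ x in α..β, Q.eval (x : ℂ) * ρ x / ((x : ℂ) - z)) =
        z ^ (-(m : ℤ)) *
          ∫ x in α..β, (x : ℂ) ^ m * Q.eval (x : ℂ) * ρ x / ((x : ℂ) - z) := by
    intro z hz hz0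
    have hne : ∀ x ∈ Set.Icc α β, (x : ℂ) - z ≠ 0 := by
      intro x hx
      exact sub_ne_zero.mpr fun h => hz ⟨x, hx, h⟩
    have hcontdk : ∀ k : ℕ, ContinuousOn
        (fun x : ℝ => (x : ℂ) ^ k * Q.eval (x : ℂ) * ρ x / ((x : ℂ) - z)) (Set.Icc α β) := by
      intro k
      exact (hcontk k).div
        ((Complex.continuous_ofReal.sub continuous_const).continuousOn) hne
    have hintdk : ∀ k : ℕ, IntervalIntegrable
        (fun x : ℝ => (x : ℂ) ^ k * Q.eval (x : ℂ) * ρ x / ((x : ℂ) - z))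
        MeasureTheory.volume α β := by
      intro k
      apply ContinuousOn.intervalIntegrable
      rw [huIcc]; exact hcontdk k
    set I : ℕ → ℂ := fun k =>
      ∫ x in α..β, (x : ℂ) ^ k * Q.eval (x : ℂ) * ρ x / ((x : ℂ) - z) with hI
    have base_eq : (∫ x in α..β, Q.eval (x : ℂ) * ρ x / ((x : ℂ) - z)) = I 0 := by
      simp only [hI, pow_zero, one_mul]
    have hrec : ∀ k : ℕ, k < m → I k = z⁻¹ * I (k + 1) := by
      intro k hk
      have hpt : Set.EqOn
          (fun x : ℝ => (x : ℂ) ^ k * Q.eval (x : ℂ) * ρ x / ((x : ℂ) - z))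
          (fun x : ℝ => z⁻¹ * ((x : ℂ) ^ (k + 1) * Q.eval (x : ℂ) * ρ x / ((x : ℂ) - z))
            - z⁻¹ * ((x : ℂ) ^ k * Q.eval (x : ℂ) * ρ x)) (Set.uIcc α β) := by
        intro x hx
        rw [huIcc] at hx
        have h1 := hne x hx
        field_simp
        ring
      have step1 : I k = ∫ x in α..β,
          (z⁻¹ * ((x : ℂ) ^ (k + 1) * Q.eval (x : ℂ) * ρ x / ((x : ℂ) - z))
            - z⁻¹ * ((x : ℂ) ^ k * Q.eval (x : ℂ) * ρ x)) :=
        intervalIntegral.integral_congr hpt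
      rw [step1, intervalIntegral.integral_sub ((hintdk (k + 1)).const_mul _)
        ((hintk k).const_mul _), intervalIntegral.integral_const_mul,
        intervalIntegral.integral_const_mul, horth k hk, mul_zero, sub_zero]
    have H : ∀ n : ℕ, n ≤ m → I 0 = z ^ (-(n : ℤ)) * I n := by
      intro n
      induction n with
      | zero => intro _; simp
      | succ n ih =>
        intro hn
        rw [ih (Nat.le_of_succ_le hn), hrec n (Nat.lt_of_succ_le hn),
          show (-((n + 1 : ℕ) : ℤ)) = (-(n : ℤ)) + (-1) by push_cast; ring,
          zpow_add₀ hz0, zpow_neg_one]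
        ring
    rw [base_eq, H m le_rfl]
  constructor
  · intro z hz hz0
    show (2 * (Real.pi : ℂ) * Complex.I)⁻¹ *
        (∫ x in α..β, Q.eval (x : ℂ) * ρ x / ((x : ℂ) - z)) = _
    rw [key z hz hz0]
    ring
  · obtain ⟨M, hM⟩ := isCompact_Icc.exists_bound_of_continuousOn (hcontk m)
    have hM0 : 0 ≤ M := le_trans (norm_nonneg _) (hM α ⟨le_rfl, hab'⟩)
    set C := max |α| |β| with hC
    have hC0 : 0 ≤ C := le_trans (abs_nonneg α) (le_max_left _ _)
    have hxC : ∀ x ∈ Set.Icc α β, |x| ≤ C := fun x hx => abs_le.mpr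
      ⟨le_trans (neg_le_neg (le_max_left |α| |β|)) (le_trans (neg_abs_le α) hx.1),
        le_trans hx.2 (le_trans (le_abs_self β) (le_max_right _ _))⟩
    refine isBoundedUnder_of_eventually_le
      (a := ‖(2 * (Real.pi : ℂ) * Complex.I)⁻¹‖ * (2 * M * |β - α|)) ?_
    filter_upwards [eventually_cobounded_le_norm (2 * C + 1)] with z hzn
    have hzpos : (0 : ℝ) < ‖z‖ := by linarith
    have hz0 : z ≠ 0 := by
      intro h; rw [h, norm_zero] at hzpos; exact lt_irrefl _ hzpos
    have hznotim : z ∉ (fun x : ℝ => (x : ℂ)) '' Set.Icc α β := by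
      rintro ⟨x, hx, rfl⟩
      have h1 := hxC x hx
      rw [Complex.norm_real, Real.norm_eq_abs] at hzn
      linarith
    have hden : ∀ x ∈ Set.Icc α β, ‖z‖ / 2 ≤ ‖(x : ℂ) - z‖ := by
      intro x hx
      have h1 : ‖z‖ - ‖(x : ℂ)‖ ≤ ‖(x : ℂ) - z‖ := by
        rw [norm_sub_rev]; exact norm_sub_norm_le z _
      have h2 := hxC x hx
      rw [Complex.norm_real, Real.norm_eq_abs] at h1
      linarith
    have hbound : ∀ x ∈ Set.uIoc α β,
        ‖(x : ℂ) ^ m * Q.eval (x : ℂ) * ρ x / ((x : ℂ) - z)‖ ≤ 2 * M / ‖z‖ := by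
      intro x hx
      have hx' : x ∈ Set.Icc α β := by
        rw [Set.uIoc_of_le hab'] at hx; exact Set.Ioc_subset_Icc_self hx
      rw [norm_div]
      have h1 := hM x hx'
      have h2 := hden x hx'
      have h3 : (0 : ℝ) < ‖(x : ℂ) - z‖ := lt_of_lt_of_le (by linarith) h2
      rw [div_le_div_iff₀ h3 hzpos]
      nlinarith [norm_nonneg ((x : ℂ) ^ m * Q.eval (x : ℂ) * ρ x)]
    have hInt : ‖∫ x in α..β, (x : ℂ) ^ m * Q.eval (x : ℂ) * ρ x / ((x : ℂ) - z)‖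
        ≤ 2 * M / ‖z‖ * |β - α| :=
      intervalIntegral.norm_integral_le_of_norm_le_const hbound
    have hRz : R z = (2 * (Real.pi : ℂ) * Complex.I)⁻¹ *
        (∫ x in α..β, Q.eval (x : ℂ) * ρ x / ((x : ℂ) - z)) := rfl
    have hzz : z ^ (m + 1) * z ^ (-(m : ℤ)) = z := by
      rw [← zpow_natCast z (m + 1), ← zpow_add₀ hz0,
        show ((m + 1 : ℕ) : ℤ) + (-(m : ℤ)) = 1 by push_cast; ring, zpow_one]
    have rearr : ∀ c u v w : ℂ, u * (c * (v * w)) = c * (u * v * w) := by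
      intros; ring
    have hmain : z ^ (m + 1) * R z = (2 * (Real.pi : ℂ) * Complex.I)⁻¹ *
        (z * ∫ x in α..β, (x : ℂ) ^ m * Q.eval (x : ℂ) * ρ x / ((x : ℂ) - z)) := by
      rw [hRz, key z hznotim hz0, rearr, hzz]
    calc ‖z ^ (m + 1) * R z‖
        = ‖(2 * (Real.pi : ℂ) * Complex.I)⁻¹‖ *
          (‖z‖ * ‖∫ x in α..β, (x : ℂ) ^ m * Q.eval (x : ℂ) * ρ x / ((x : ℂ) - z)‖) := by
          rw [hmain, norm_mul, norm_mul]
      _ ≤ ‖(2 * (Real.pi : ℂ) * Complex.I)⁻¹‖ * (‖z‖ * (2 * M / ‖z‖ * |β - α|)) := by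
          gcongr
      _ = ‖(2 * (Real.pi : ℂ) * Complex.I)⁻¹‖ * (2 * M * |β - α|) := by
          rw [show ‖z‖ * (2 * M / ‖z‖ * |β - α|) = ‖z‖ / ‖z‖ * (2 * M * |β - α|) by ring,
            div_self (ne_of_gt hzpos), one_mul]
end

section
/- Let a, p be real with 0 < a < 1/√2 and a < p < √((1+a²)/3). Then there exists R > 1 such that for every real x with x > R, the cubic equation A(x)h³ − 3B₂(x)h − 2B₁(x) = 0 has three distinct real solutions; that is, there exist real numbers h₀ > h₁ > h₂ each satisfying A(x)h³ − 3B₂(x)h − 2B₁(x) = 0. -/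
lemma cubic_three_roots (A B x : ℝ) (hA : 0 < A) (hB : 0 < B) (hx : 0 < x)
    (hcube : A * x ^ 2 < B ^ 3) :
    ∃ h₀ h₁ h₂ : ℝ, h₁ < h₀ ∧ h₂ < h₁ ∧
      A * h₀ ^ 3 - 3 * B * h₀ - 2 * x = 0 ∧
      A * h₁ ^ 3 - 3 * B * h₁ - 2 * x = 0 ∧
      A * h₂ ^ 3 - 3 * B * h₂ - 2 * x = 0 := by
  set f : ℝ → ℝ := fun h => A * h ^ 3 - 3 * B * h - 2 * x with hf
  have hcont : Continuous f := by fun_prop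
  have hBA : 0 < B / A := div_pos hB hA
  set t : ℝ := Real.sqrt (B / A) with htdef
  have ht0 : 0 < t := Real.sqrt_pos.mpr hBA
  have ht2 : t ^ 2 = B / A := Real.sq_sqrt hBA.le
  have hAt2 : A * t ^ 2 = B := by rw [ht2]; field_simp
  -- B*t > x
  have hBtx : x < B * t := by
    have hsq : x ^ 2 < (B * t) ^ 2 := by nlinarith [sq_nonneg t]
    exact lt_of_pow_lt_pow_left₀ 2 (mul_pos hB ht0).le hsq
  have hfnt : f (-t) = 2 * B * t - 2 * x := by
    simp only [hf]; linear_combination (-t) * hAt2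
  have hft : f t = -2 * B * t - 2 * x := by
    simp only [hf]; linear_combination t * hAt2
  have hfnt0 : 0 < f (-t) := by rw [hfnt]; linarith
  have hft0 : f t < 0 := by rw [hft]; nlinarith [mul_pos hB ht0]
  set s : ℝ := 1 + (2 * B * t + 2 * x) / A with hsdef
  have hs1 : 1 ≤ s := by
    have h : 0 ≤ (2 * B * t + 2 * x) / A :=
      div_nonneg (by nlinarith [mul_pos hB ht0]) hA.le
    rw [hsdef]; linarith
  have hAs : A * s = A + 2 * B * t + 2 * x := by
    rw [hsdef]; field_simp; ring
  set M : ℝ := t + s with hMdef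
  have hexp : f M = -2 * B * t - 2 * x + 3 * A * t * s ^ 2 + A * s ^ 3 := by
    simp only [hf, hMdef]; linear_combination (t + 3 * s) * hAt2
  have hfM : 0 < f M := by
    have hs0 : 0 < s := by linarith
    have h1 : A * s ≤ A * s ^ 3 := by nlinarith
    have h2 : 0 < 3 * A * t * s ^ 2 := by positivity
    linarith
  have hfnM : f (-M) < 0 := by
    have : f (-M) = -f M - 4 * x := by simp only [hf]; ring
    rw [this]; linarith
  have htM : t ≤ M := by linarith
  have hntt : -t ≤ t := by linarith
  have hnMnt : -M ≤ -t := by linarith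
  obtain ⟨h₀, hm0, hv0⟩ := intermediate_value_Ioo htM hcont.continuousOn ⟨hft0, hfM⟩
  obtain ⟨h₁, hm1, hv1⟩ := intermediate_value_Ioo' hntt hcont.continuousOn ⟨hft0, hfnt0⟩
  obtain ⟨h₂, hm2, hv2⟩ := intermediate_value_Ioo hnMnt hcont.continuousOn ⟨hfnM, hfnt0⟩
  exact ⟨h₀, h₁, h₂, lt_trans hm1.2 hm0.1, lt_trans hm2.2 hm1.1, hv0, hv1, hv2⟩

/-- For `0 < a < 1/√2` and `a < p < √((1+a²)/3)`, all three solutions of the algebraic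
equation `(x²−1)(x²−a²)h³ − 3(x²−p²)h − 2x = 0` are real and distinct for all
sufficiently large positive real `x`. -/
theorem three_real_roots_for_large_x (a p : ℝ) (ha0 : 0 < a)
    (ha1 : a < 1 / Real.sqrt 2) (hp0 : a < p) (hp1 : p < Real.sqrt ((1 + a ^ 2) / 3)) :
    ∃ R : ℝ, 1 < R ∧ ∀ x : ℝ, R < x →
      ∃ h₀ h₁ h₂ : ℝ, h₁ < h₀ ∧ h₂ < h₁ ∧
        (x ^ 2 - 1) * (x ^ 2 - a ^ 2) * h₀ ^ 3 - 3 * (x ^ 2 - p ^ 2) * h₀ - 2 * x = 0 ∧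
        (x ^ 2 - 1) * (x ^ 2 - a ^ 2) * h₁ ^ 3 - 3 * (x ^ 2 - p ^ 2) * h₁ - 2 * x = 0 ∧
        (x ^ 2 - 1) * (x ^ 2 - a ^ 2) * h₂ ^ 3 - 3 * (x ^ 2 - p ^ 2) * h₂ - 2 * x = 0 := by
  have hp' : p ^ 2 < (1 + a ^ 2) / 3 := by
    have := (Real.lt_sqrt (by linarith : (0:ℝ) ≤ p)).mp hp1
    linarith
  set c : ℝ := 1 + a ^ 2 - 3 * p ^ 2 with hcdef
  have hc : 0 < c := by rw [hcdef]; linarith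
  have ha1' : a < 1 := by
    have h2 : (1:ℝ) < Real.sqrt 2 := by
      nlinarith [Real.sq_sqrt (by norm_num : (0:ℝ) ≤ 2), Real.sqrt_nonneg 2]
    have : 1 / Real.sqrt 2 < 1 := by
      rw [div_lt_one (by linarith)]; exact h2
    linarith
  have hp00 : 0 < p := lt_trans ha0 hp0
  have hdnn : 0 ≤ (a ^ 2 + p ^ 6) / c := div_nonneg (by positivity) hc.le
  refine ⟨1 + p + (a ^ 2 + p ^ 6) / c, by linarith, fun x hx => ?_⟩
  have hx1 : 1 < x := by linarith
  have hxp : p < x := by linarith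
  have hx0 : 0 < x := by linarith
  have hA : 0 < (x ^ 2 - 1) * (x ^ 2 - a ^ 2) := by
    have h1 : 0 < x ^ 2 - 1 := by nlinarith
    have h2 : 0 < x ^ 2 - a ^ 2 := by nlinarith
    exact mul_pos h1 h2
  have hB : 0 < x ^ 2 - p ^ 2 := by nlinarith
  have hcube : (x ^ 2 - 1) * (x ^ 2 - a ^ 2) * x ^ 2 < (x ^ 2 - p ^ 2) ^ 3 := by
    have hu : 1 + p + (a ^ 2 + p ^ 6) / c < x ^ 2 := by nlinarith
    have hcu : a ^ 2 + p ^ 6 < c * x ^ 2 := by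
      have h := (div_lt_iff₀ hc).mp (by linarith : (a ^ 2 + p ^ 6) / c < x ^ 2)
      nlinarith [h]
    rw [hcdef] at hcu
    have hx2 : 1 < x ^ 2 := by nlinarith
    nlinarith [mul_lt_mul_of_pos_right hcu (pow_pos hx0 2), pow_pos hx0 2,
      mul_nonneg (pow_nonneg hp00.le 4) (pow_pos hx0 2).le,
      mul_lt_mul_of_pos_left hx2 (pow_pos hp00 6)]
  obtain ⟨h₀, h₁, h₂, hlt1, hlt2, e0, e1, e2⟩ :=
    cubic_three_roots ((x ^ 2 - 1) * (x ^ 2 - a ^ 2)) (x ^ 2 - p ^ 2) x hA hB hx0 hcube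
  exact ⟨h₀, h₁, h₂, hlt1, hlt2, by linarith [e0], by linarith [e1], by linarith [e2]⟩
end
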